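/- arXiv:1603.06791 — 4 statements merged into one kernel-verified Lean document; each statement's English description precedes it below -/
import Mathlib

section
/- Let n ≥ 1, let a ∈ ℝ and h ∈ ℝ, let W : ℝⁿ → ℝ be continuously differentiable, and let v : ℝⁿ → ℂ be twice continuously differentiable with compact support. Then the following exact integration-by-parts (Rellich–Carleman) identity holds: 2 Re ∫_{{x_n > a}} ((-h²Δ + W)v)(x) · conj(∂_{x_n}v(x)) dx = h² ∫_{{x_n = a}} |∂_{x_n}v(x',a)|² dx' − h² ∫_{{x_n = a}} |∇_{x'}v(x',a)|² dx' − ∫_{{x_n = a}} W(x',a) |v(x',a)|² dx' − ∫_{{x_n > a}} (∂_{x_n}W)(x) |v(x)|² dx, where x = (x', x_n) ∈ ℝⁿ⁻¹ × ℝ, the integrals over {x_n > a} are with respect to Lebesgue measure on ℝⁿ, and the integrals over {x_n = a} are with respect to Lebesgue measure on ℝⁿ⁻¹. -/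
/-!
Pointwise, `2 Re((-h²Δv + Wv) ∂ₙv̄)` is a divergence up to the potential term: with
`F = h²|∇'v|² - h²|∂ₙv|² + W|v|²` and `Gᵢ = -2h² Re(∂ᵢv ∂ₙv̄)` it equals
`∂ₙF + Σᵢ ∂ᵢGᵢ - (∂ₙW)|v|²`, by the product rule and the symmetry `∂ₙ∂ᵢv = ∂ᵢ∂ₙv`.
Integrating over `{xₙ > a}` by Fubini, every `∂ᵢGᵢ` integrates to zero along `ℝⁿ⁻¹`, while
`∫_a^∞ ∂ₙF dxₙ = -F(x', a)` since `F` has compact support.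
-/

open MeasureTheory

/-- Partial derivative in the last coordinate, for functions on ℝⁿ ≅ ℝ^k × ℝ. -/
noncomputable def pdLast {k : ℕ} (v : (Fin k → ℝ) × ℝ → ℂ) (x : (Fin k → ℝ) × ℝ) : ℂ :=
  fderiv ℝ v x (0, 1)

noncomputable def pdTang {k : ℕ} (i : Fin k) (v : (Fin k → ℝ) × ℝ → ℂ)
    (x : (Fin k → ℝ) × ℝ) : ℂ :=
  fderiv ℝ v x (Pi.single i 1, 0)

/-- Laplacian on ℝⁿ ≅ ℝ^k × ℝ. -/
noncomputable def lap {k : ℕ} (v : (Fin k → ℝ) × ℝ → ℂ) (x : (Fin k → ℝ) × ℝ) : ℂ :=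
  (∑ i : Fin k,
      fderiv ℝ (fun y => fderiv ℝ v y (Pi.single i 1, 0)) x (Pi.single i 1, 0))
    + fderiv ℝ (fun y => fderiv ℝ v y (0, 1)) x (0, 1)

open Set
open scoped RealInnerProductSpace

section Slices
variable {X Y M : Type*} [TopologicalSpace X] [TopologicalSpace Y] [Zero M] {f : X × Y → M}

lemma HasCompactSupport.comp_prodMkLeft [T2Space X] (hf : HasCompactSupport f) (y : Y) :
    HasCompactSupport fun x => f (x, y) :=
  .intro (hf.image continuous_fst) fun _ hx =>
    image_eq_zero_of_notMem_tsupport fun h => hx ⟨_, h, rfl⟩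

lemma HasCompactSupport.comp_prodMkRight [T2Space Y] (hf : HasCompactSupport f) (x : X) :
    HasCompactSupport fun y => f (x, y) :=
  .intro (hf.image continuous_snd) fun _ hy =>
    image_eq_zero_of_notMem_tsupport fun h => hy ⟨_, h, rfl⟩

end Slices

lemma Continuous.integrable_prodMkLeft_of_hasCompactSupport {X Y F : Type*} [TopologicalSpace X]
    [T2Space X] [MeasurableSpace X] [OpensMeasurableSpace X] {μ : Measure X}
    [IsFiniteMeasureOnCompacts μ] [TopologicalSpace Y] [NormedAddCommGroup F] {g : X × Y → F}
    (hg : Continuous g) (hgc : HasCompactSupport g) (y : Y) :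
    Integrable (fun x => g (x, y)) μ :=
  (hg.comp (continuous_id.prodMk continuous_const)).integrable_of_hasCompactSupport
    (hgc.comp_prodMkLeft y)

lemma HasCompactSupport.integrable_fderiv_apply {E F : Type*} [NormedAddCommGroup E]
    [NormedSpace ℝ E] [MeasurableSpace E] [OpensMeasurableSpace E] {μ : Measure E}
    [IsFiniteMeasureOnCompacts μ] [NormedAddCommGroup F] [NormedSpace ℝ F] {g : E → F}
    (hgc : HasCompactSupport g) (hg : ContDiff ℝ 1 g) (w : E) :
    Integrable (fun x => fderiv ℝ g x w) μ :=
  ((hg.continuous_fderiv one_ne_zero).clm_apply continuous_const).integrable_of_hasCompactSupport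
    (hgc.fderiv_apply ℝ w)

lemma MeasureTheory.Measure.prod_restrict_right {α β : Type*} [MeasurableSpace α]
    [MeasurableSpace β] (μ : Measure α) (ν : Measure β) [SFinite μ] [SFinite ν] (t : Set β) :
    μ.prod (ν.restrict t) = (μ.prod ν).restrict (Prod.snd ⁻¹' t) := by
  rw [← univ_prod, ← Measure.prod_restrict, Measure.restrict_univ]

section Calculus
variable {E F : Type*} [NormedAddCommGroup E] [NormedSpace ℝ E]
  [NormedAddCommGroup F] [InnerProductSpace ℝ F]

lemma fderiv_fun_norm_sq_apply {g : E → F} {x : E} (hg : DifferentiableAt ℝ g x) (w : E) :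
    fderiv ℝ (fun y => ‖g y‖ ^ 2) x w = 2 * ⟪g x, fderiv ℝ g x w⟫ := by
  rw [hg.hasFDerivAt.norm_sq.fderiv]
  simp

variable {v : E → F}

lemma contDiff_fderiv_apply (hv : ContDiff ℝ 2 v) (u : E) :
    ContDiff ℝ 1 fun y => fderiv ℝ v y u :=
  (hv.fderiv_right (m := 1) (by norm_num)).clm_apply contDiff_const

lemma fderiv_fderiv_apply_comm (hv : ContDiff ℝ 2 v) (u w x : E) :
    fderiv ℝ (fun y => fderiv ℝ v y u) x w = fderiv ℝ (fun y => fderiv ℝ v y w) x u := by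
  have hdv := (hv.fderiv_right (m := 1) (by norm_num)).differentiable one_ne_zero x
  rw [fderiv_clm_apply hdv (differentiableAt_const u),
    fderiv_clm_apply hdv (differentiableAt_const w)]
  simpa using hv.contDiffAt.isSymmSndFDerivAt (by simp) w u

lemma fderiv_norm_sq_fderiv_sub_two_fderiv_inner (hv : ContDiff ℝ 2 v) (u e x : E) :
    fderiv ℝ (fun y => ‖fderiv ℝ v y u‖ ^ 2) x e
        - 2 * fderiv ℝ (fun y => ⟪fderiv ℝ v y u, fderiv ℝ v y e⟫) x u
      = -2 * ⟪fderiv ℝ v x e, fderiv ℝ (fun y => fderiv ℝ v y u) x u⟫ := by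
  have hu := (contDiff_fderiv_apply hv u).differentiable one_ne_zero x
  have he := (contDiff_fderiv_apply hv e).differentiable one_ne_zero x
  rw [fderiv_fun_norm_sq_apply hu, fderiv_inner_apply ℝ hu he, fderiv_fderiv_apply_comm hv u e,
    real_inner_comm (fderiv ℝ v x e)]
  ring

end Calculus

section NormalDerivative
variable {E F : Type*} [NormedAddCommGroup E] [NormedSpace ℝ E] [MeasurableSpace E]
  [BorelSpace E] {μ : Measure E} [SFinite μ]
  [IsFiniteMeasureOnCompacts μ] [NormedAddCommGroup F] [NormedSpace ℝ F] [CompleteSpace F]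

theorem setIntegral_halfSpace_fderiv_normal {G : E × ℝ → F} (hG : ContDiff ℝ 1 G)
    (hGc : HasCompactSupport G) (a : ℝ) :
    ∫ x in {x : E × ℝ | a < x.2}, fderiv ℝ G x (0, 1) ∂(μ.prod volume)
      = -∫ x', G (x', a) ∂μ := by
  have hint := (hGc.integrable_fderiv_apply (μ := μ.prod volume) hG (0, 1)).restrict
    (s := Prod.snd ⁻¹' Ioi a)
  change ∫ x in Prod.snd ⁻¹' Ioi a, _ ∂_ = _
  rw [← Measure.prod_restrict_right] at hint ⊢
  rw [integral_prod _ hint, ← integral_neg]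
  refine integral_congr_ae (.of_forall fun x' => ?_)
  have hslice : ContDiff ℝ 1 fun t => G (x', t) := hG.comp (contDiff_const.prodMk contDiff_id)
  dsimp only
  rw [← (hGc.comp_prodMkRight x').integral_Ioi_deriv_eq hslice a]
  refine integral_congr_ae (.of_forall fun t => ?_)
  exact (((hG.differentiable one_ne_zero _).hasFDerivAt.comp_hasDerivAt t
    ((hasDerivAt_const t x').prodMk (hasDerivAt_id t))).deriv).symm

end NormalDerivative

section TangentialDerivative
variable {E F : Type*} [NormedAddCommGroup E] [NormedSpace ℝ E] [FiniteDimensional ℝ E]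
  [MeasurableSpace E] [BorelSpace E] {μ : Measure E} [μ.IsAddHaarMeasure]
  [NormedAddCommGroup F] [NormedSpace ℝ F]

lemma integral_fderiv_apply_eq_zero {g : E → F} (hg : ContDiff ℝ 1 g)
    (hgc : HasCompactSupport g) (w : E) : ∫ x, fderiv ℝ g x w ∂μ = 0 := by
  simpa using integral_smul_fderiv_eq_neg_fderiv_smul_of_integrable (f := fun _ => (1 : ℝ))
    (by simp) (by simpa using hgc.integrable_fderiv_apply (μ := μ) hg w)
    (by simpa using hg.continuous.integrable_of_hasCompactSupport hgc)
    (fun x _ => differentiableAt_const _) (fun x _ => hg.differentiable one_ne_zero x)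

theorem setIntegral_halfSpace_fderiv_tangential {G : E × ℝ → F} (hG : ContDiff ℝ 1 G)
    (hGc : HasCompactSupport G) (a : ℝ) (w : E) :
    ∫ x in {x : E × ℝ | a < x.2}, fderiv ℝ G x (w, 0) ∂(μ.prod volume) = 0 := by
  have hint := (hGc.integrable_fderiv_apply (μ := μ.prod volume) hG (w, 0)).restrict
    (s := Prod.snd ⁻¹' Ioi a)
  change ∫ x in Prod.snd ⁻¹' Ioi a, _ ∂_ = _
  rw [← Measure.prod_restrict_right] at hint ⊢
  rw [integral_prod_symm _ hint]
  refine integral_eq_zero_of_ae (.of_forall fun t => ?_)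
  have hslice : ContDiff ℝ 1 fun x' => G (x', t) := hG.comp (contDiff_id.prodMk contDiff_const)
  dsimp only [Pi.zero_apply]
  rw [← integral_fderiv_apply_eq_zero (μ := μ) hslice (hGc.comp_prodMkLeft t) w]
  refine integral_congr_ae (.of_forall fun x' => ?_)
  have hd : HasFDerivAt (fun x' => G (x', t)) ((fderiv ℝ G (x', t)).comp (.inl ℝ E ℝ)) x' :=
    (hG.differentiable one_ne_zero _).hasFDerivAt.comp x' (hasFDerivAt_prodMk_left x' t)
  simp [hd.fderiv]

end TangentialDerivative

section Rellich
variable {k : ℕ}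

noncomputable def normalFlux (h : ℝ) (W : (Fin k → ℝ) × ℝ → ℝ) (v : (Fin k → ℝ) × ℝ → ℂ)
    (x : (Fin k → ℝ) × ℝ) : ℝ :=
  h ^ 2 * ∑ i, ‖pdTang i v x‖ ^ 2 - h ^ 2 * ‖pdLast v x‖ ^ 2 + W x * ‖v x‖ ^ 2

noncomputable def tangentialFlux (h : ℝ) (i : Fin k) (v : (Fin k → ℝ) × ℝ → ℂ)
    (x : (Fin k → ℝ) × ℝ) : ℝ :=
  -(2 * h ^ 2) * ⟪pdTang i v x, pdLast v x⟫

variable {h : ℝ} {W : (Fin k → ℝ) × ℝ → ℝ} {v : (Fin k → ℝ) × ℝ → ℂ}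

lemma fderiv_normalFlux_apply (hW : Differentiable ℝ W) (hv : ContDiff ℝ 2 v)
    (x w : (Fin k → ℝ) × ℝ) :
    fderiv ℝ (normalFlux h W v) x w
      = h ^ 2 * ∑ i, fderiv ℝ (fun y => ‖pdTang i v y‖ ^ 2) x w
        - h ^ 2 * fderiv ℝ (fun y => ‖pdLast v y‖ ^ 2) x w
        + (W x * fderiv ℝ (fun y => ‖v y‖ ^ 2) x w + ‖v x‖ ^ 2 * fderiv ℝ W x w) := by
  have hT i := (contDiff_fderiv_apply hv (Pi.single i 1, 0)).differentiable one_ne_zero x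
  have hP := (contDiff_fderiv_apply hv (0, 1)).differentiable one_ne_zero x
  have hvx := hv.differentiable (by norm_num) x
  have hN := (((HasFDerivAt.fun_sum (u := Finset.univ) fun i _ =>
    ((hT i).norm_sq ℝ).hasFDerivAt).const_mul (h ^ 2)).fun_sub
    ((hP.norm_sq ℝ).hasFDerivAt.const_mul (h ^ 2))).fun_add
    ((hW x).hasFDerivAt.fun_mul (hvx.norm_sq ℝ).hasFDerivAt)
  unfold normalFlux pdTang pdLast
  rw [hN.fderiv]
  simp

lemma fderiv_tangentialFlux_apply (hv : ContDiff ℝ 2 v) (i : Fin k) (x w : (Fin k → ℝ) × ℝ) :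
    fderiv ℝ (tangentialFlux h i v) x w
      = -(2 * h ^ 2) * fderiv ℝ (fun y => ⟪pdTang i v y, pdLast v y⟫) x w := by
  have hT := (contDiff_fderiv_apply hv (Pi.single i 1, 0)).differentiable one_ne_zero x
  have hP := (contDiff_fderiv_apply hv (0, 1)).differentiable one_ne_zero x
  unfold tangentialFlux
  rw [fderiv_const_mul (a := fun y => ⟪pdTang i v y, pdLast v y⟫) (hT.inner ℝ hP)]
  rfl

lemma two_re_mul_conj_pdLast_eq (hW : Differentiable ℝ W) (hv : ContDiff ℝ 2 v)
    (x : (Fin k → ℝ) × ℝ) :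
    2 * ((-(h ^ 2 : ℂ) * lap v x + (W x : ℂ) * v x) * (starRingEnd ℂ) (pdLast v x)).re
      = fderiv ℝ (normalFlux h W v) x (0, 1)
        + ∑ i, fderiv ℝ (tangentialFlux h i v) x (Pi.single i 1, 0)
        - fderiv ℝ W x (0, 1) * ‖v x‖ ^ 2 := by
  have hcomm : ∑ i, fderiv ℝ (fun y => ‖pdTang i v y‖ ^ 2) x (0, 1)
        - 2 * ∑ i, fderiv ℝ (fun y => ⟪pdTang i v y, pdLast v y⟫) x (Pi.single i 1, 0)
      = -2 * ∑ i, ⟪pdLast v x, fderiv ℝ (fun y => pdTang i v y) x (Pi.single i 1, 0)⟫ := by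
    rw [Finset.mul_sum, Finset.mul_sum, ← Finset.sum_sub_distrib]
    exact Finset.sum_congr rfl fun i _ => fderiv_norm_sq_fderiv_sub_two_fderiv_inner hv _ _ x
  have hP2 := fderiv_fun_norm_sq_apply
    ((contDiff_fderiv_apply hv (0, 1)).differentiable one_ne_zero x) (0, 1)
  have hv2 := fderiv_fun_norm_sq_apply (hv.differentiable (by norm_num) x) (0, 1)
  rw [real_inner_comm (fderiv ℝ v x (0, 1))] at hv2
  have hLHS : 2 * ((-(h ^ 2 : ℂ) * lap v x + (W x : ℂ) * v x) * (starRingEnd ℂ) (pdLast v x)).re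
      = -(2 * h ^ 2) * ⟪pdLast v x, lap v x⟫ + 2 * W x * ⟪pdLast v x, v x⟫ := by
    rw [← Complex.inner, ← Complex.ofReal_pow, ← Complex.ofReal_neg, ← Complex.real_smul,
      ← Complex.real_smul, inner_add_right, real_inner_smul_right, real_inner_smul_right]
    ring
  rw [hLHS, lap, inner_add_right, inner_sum, fderiv_normalFlux_apply hW hv,
    Finset.sum_congr rfl fun i _ => fderiv_tangentialFlux_apply hv i x _]
  simp only [pdTang, pdLast] at *
  rw [← Finset.mul_sum]
  linear_combination -h ^ 2 * hcomm + h ^ 2 * hP2 - W x * hv2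

lemma contDiff_normalFlux (hW : ContDiff ℝ 1 W) (hv : ContDiff ℝ 2 v) :
    ContDiff ℝ 1 (normalFlux h W v) :=
  ((contDiff_const.mul (ContDiff.sum fun _ _ => (contDiff_fderiv_apply hv _).norm_sq ℝ)).sub
    (contDiff_const.mul ((contDiff_fderiv_apply hv _).norm_sq ℝ))).add
    (hW.mul ((hv.of_le one_le_two).norm_sq ℝ))

lemma contDiff_tangentialFlux (hv : ContDiff ℝ 2 v) (i : Fin k) :
    ContDiff ℝ 1 (tangentialFlux h i v) :=
  contDiff_const.mul ((contDiff_fderiv_apply hv _).inner ℝ (contDiff_fderiv_apply hv _))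

lemma hasCompactSupport_normalFlux (hvc : HasCompactSupport v) :
    HasCompactSupport (normalFlux h W v) :=
  .intro hvc fun x hx => by
    simp [normalFlux, pdTang, pdLast, fderiv_of_notMem_tsupport ℝ hx,
      image_eq_zero_of_notMem_tsupport hx]

lemma hasCompactSupport_tangentialFlux (hvc : HasCompactSupport v) (i : Fin k) :
    HasCompactSupport (tangentialFlux h i v) :=
  .intro hvc fun x hx => by simp [tangentialFlux, pdTang, fderiv_of_notMem_tsupport ℝ hx]

lemma continuous_lap (hv : ContDiff ℝ 2 v) : Continuous (lap v) := by
  have hd u w : Continuous fun x => fderiv ℝ (fun y => fderiv ℝ v y u) x w :=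
    ((contDiff_fderiv_apply hv u).continuous_fderiv one_ne_zero).clm_apply continuous_const
  exact (continuous_finsetSum _ fun i _ => hd _ _).add (hd _ _)

lemma integral_normalFlux_slice (hW : ContDiff ℝ 1 W) (hv : ContDiff ℝ 2 v)
    (hvc : HasCompactSupport v) (a : ℝ) :
    ∫ x', normalFlux h W v (x', a)
      = h ^ 2 * (∫ x', ∑ i, ‖pdTang i v (x', a)‖ ^ 2) - h ^ 2 * (∫ x', ‖pdLast v (x', a)‖ ^ 2)
        + ∫ x', W (x', a) * ‖v (x', a)‖ ^ 2 := by
  have hslice (g : (Fin k → ℝ) × ℝ → ℝ) (hg : Continuous g) (h0 : ∀ x ∉ tsupport v, g x = 0) :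
      Integrable fun x' => g (x', a) :=
    hg.integrable_prodMkLeft_of_hasCompactSupport (.intro hvc h0) a
  have hT := hslice (fun x => ∑ i, ‖pdTang i v x‖ ^ 2)
    (continuous_finsetSum _ fun i _ => (contDiff_fderiv_apply hv _).continuous.norm.pow 2)
    fun x hx => by simp [pdTang, fderiv_of_notMem_tsupport ℝ hx]
  have hP := hslice (fun x => ‖pdLast v x‖ ^ 2) ((contDiff_fderiv_apply hv _).continuous.norm.pow 2)
    fun x hx => by simp [pdLast, fderiv_of_notMem_tsupport ℝ hx]
  have hWv := hslice (fun x => W x * ‖v x‖ ^ 2) (hW.continuous.mul (hv.continuous.norm.pow 2))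
    fun x hx => by simp [image_eq_zero_of_notMem_tsupport hx]
  simp only [normalFlux]
  rw [integral_add ((hT.const_mul _).sub' (hP.const_mul _)) hWv,
    integral_sub (hT.const_mul _) (hP.const_mul _), integral_const_mul, integral_const_mul]

lemma two_re_setIntegral_halfSpace_eq (hW : ContDiff ℝ 1 W) (hv : ContDiff ℝ 2 v)
    (hvc : HasCompactSupport v) (a : ℝ) :
    2 * (∫ x in {x : (Fin k → ℝ) × ℝ | a < x.2},
          ((-(h ^ 2 : ℂ) * lap v x + (W x : ℂ) * v x) * (starRingEnd ℂ) (pdLast v x))).re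
      = -(∫ x', normalFlux h W v (x', a))
        - ∫ x in {x : (Fin k → ℝ) × ℝ | a < x.2}, fderiv ℝ W x (0, 1) * ‖v x‖ ^ 2 := by
  have hP : Continuous (pdLast v) := (contDiff_fderiv_apply hv _).continuous
  have hf : Integrable fun x =>
      (-(h ^ 2 : ℂ) * lap v x + (W x : ℂ) * v x) * (starRingEnd ℂ) (pdLast v x) :=
    Continuous.integrable_of_hasCompactSupport
      (((continuous_const.mul (continuous_lap hv)).add
        ((Complex.continuous_ofReal.comp hW.continuous).mul hv.continuous)).mul
        (Complex.continuous_conj.comp hP))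
      (.intro hvc fun x hx => by simp [pdLast, fderiv_of_notMem_tsupport ℝ hx])
  have hN := (hasCompactSupport_normalFlux (h := h) (W := W) hvc).integrable_fderiv_apply
    (μ := volume) (contDiff_normalFlux hW hv) (0, 1)
  have hT i := (hasCompactSupport_tangentialFlux (h := h) hvc i).integrable_fderiv_apply
    (μ := volume) (contDiff_tangentialFlux hv i) (Pi.single i 1, 0)
  have hTsum := integrable_finsetSum (μ := volume.restrict {x : (Fin k → ℝ) × ℝ | a < x.2})
    Finset.univ fun i _ => (hT i).restrict
  have hWv : Integrable fun x => fderiv ℝ W x (0, 1) * ‖v x‖ ^ 2 :=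
    Continuous.integrable_of_hasCompactSupport
      (((hW.continuous_fderiv one_ne_zero).clm_apply continuous_const).mul
        (hv.continuous.norm.pow 2))
      (.intro hvc fun x hx => by simp [image_eq_zero_of_notMem_tsupport hx])
  have hre := integral_re (hf.restrict (s := {x : (Fin k → ℝ) × ℝ | a < x.2}))
  simp only [RCLike.re_to_complex] at hre
  rw [← hre, ← integral_const_mul,
    integral_congr_ae (.of_forall fun x =>
      two_re_mul_conj_pdLast_eq (h := h) (hW.differentiable one_ne_zero) hv x),
    integral_sub (hN.restrict.fun_add hTsum) hWv.restrict, integral_add hN.restrict hTsum,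
    integral_finsetSum _ fun i _ => (hT i).restrict, Measure.volume_eq_prod,
    setIntegral_halfSpace_fderiv_normal (contDiff_normalFlux hW hv)
      (hasCompactSupport_normalFlux hvc)]
  simp only [setIntegral_halfSpace_fderiv_tangential (contDiff_tangentialFlux hv _)
    (hasCompactSupport_tangentialFlux hvc _), Finset.sum_const_zero, add_zero]

end Rellich

/-- Exact Rellich–Carleman integration-by-parts identity (Lemma in Proposition 6.1):
`2 Re ∫_{xₙ>a} ((-h²Δ + W)v) conj(∂ₙ v) dx
  = h² ∫_{xₙ=a} |∂ₙ v|² dx' - h² ∫_{xₙ=a} |∇' v|² dx'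
    - ∫_{xₙ=a} W |v|² dx' - ∫_{xₙ>a} (∂ₙ W) |v|² dx`. -/
theorem stmt1 {k : ℕ} (a h : ℝ) (W : (Fin k → ℝ) × ℝ → ℝ) (hW : ContDiff ℝ 1 W)
    (v : (Fin k → ℝ) × ℝ → ℂ) (hv : ContDiff ℝ 2 v) (hvc : HasCompactSupport v) :
    2 * (∫ x in {x : (Fin k → ℝ) × ℝ | a < x.2},
          ((-(h ^ 2 : ℂ) * lap v x + (W x : ℂ) * v x) * (starRingEnd ℂ) (pdLast v x))).re
      = h ^ 2 * (∫ x' : Fin k → ℝ, ‖pdLast v (x', a)‖ ^ 2)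
        - h ^ 2 * (∫ x' : Fin k → ℝ, ∑ i : Fin k, ‖pdTang i v (x', a)‖ ^ 2)
        - (∫ x' : Fin k → ℝ, W (x', a) * ‖v (x', a)‖ ^ 2)
        - (∫ x in {x : (Fin k → ℝ) × ℝ | a < x.2},
            (fderiv ℝ W x (0, 1)) * ‖v x‖ ^ 2) := by
  rw [two_re_setIntegral_halfSpace_eq hW hv hvc a, integral_normalFlux_slice hW hv hvc a]
  ring
end

section
/- Let n ≥ 1, let M > 0 and R > 0, let ψ : ℝⁿ → ℝ be continuously differentiable and V : ℝⁿ → ℝ satisfy the eikonal equation |∇ψ(y)|² + V(y) = 0 for all y, with |∇ψ(y)| ≤ M for all y. Let τ ∈ ℝⁿ with |τ| = 1, and define the complex phase φ(x,y,τ) := (x−y)·τ + (i/2)|x−y|², so that ∇_y φ(x,y,τ) = −τ − i(x−y) ∈ ℂⁿ. For μ ∈ (0,1], ρ ∈ ℂ with |ρ| ≤ R, and x, y ∈ ℝⁿ with |x−y| ≤ 1, define c₂ := Σ_{j=1}^n (μ ∂_j ψ(y) − ∂_{y_j}φ(x,y,τ))² + μ²(V(y) − ρ) ∈ ℂ (where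 the square is the complex square, not the modulus squared). Then |c₂ − 1| ≤ (3 + 4M + R)(|x−y| + μ). -/
/-!
Writing the `j`-th entry as `aⱼ + i dⱼ` with the real vectors `a = μ∇ψ(y) + τ` and `d = x - y`,
the sum of squares is `|a|² - |d|² + 2i a·d`. Since `|τ| = 1`, `|a|² = 1 + 2μ ∇ψ·τ + μ²|∇ψ|²`,
and the eikonal equation cancels `μ²|∇ψ|²` against `μ²V(y)`. What is left of `c₂ - 1`,
namely `2μ ∇ψ·τ - |d|² + 2i a·d - μ²ρ`, is `O(μ + |d|)` by Cauchy–Schwarz.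
-/

open Complex

variable {ι : Type*} [Fintype ι]

lemma fderiv_apply_single_eq_gradient [DecidableEq ι] (f : EuclideanSpace ℝ ι → ℝ)
    (y : EuclideanSpace ℝ ι) (j : ι) :
    fderiv ℝ f y (EuclideanSpace.single j 1) = gradient f y j := by
  rw [← inner_gradient_left, EuclideanSpace.inner_single_right, one_mul, conj_trivial]

lemma sum_ofReal_add_I_mul_sq (a b : EuclideanSpace ℝ ι) :
    ∑ j, ((a j : ℂ) + I * b j) ^ 2
      = ((‖a‖ ^ 2 - ‖b‖ ^ 2 : ℝ) : ℂ) + 2 * I * (inner ℝ a b : ℝ) := by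
  simp only [EuclideanSpace.norm_sq_eq, PiLp.inner_apply, RCLike.inner_apply, conj_trivial,
    Real.norm_eq_abs, sq_abs]
  push_cast
  rw [Finset.mul_sum, ← Finset.sum_sub_distrib, ← Finset.sum_add_distrib]
  refine Finset.sum_congr rfl fun j _ => ?_
  linear_combination (b j : ℂ) ^ 2 * I_sq

lemma norm_ofReal_add_two_I_mul_sub_le (u v : ℝ) (w : ℂ) :
    ‖(u : ℂ) + 2 * I * v - w‖ ≤ |u| + 2 * |v| + ‖w‖ := by
  calc ‖(u : ℂ) + 2 * I * v - w‖ ≤ ‖(u : ℂ)‖ + ‖2 * I * v‖ + ‖w‖ :=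
        norm_sub_le_of_le (norm_add_le _ _) le_rfl
    _ = |u| + 2 * |v| + ‖w‖ := by simp

lemma norm_smul_add_sq_of_norm_eq_one (μ : ℝ) (g τ : EuclideanSpace ℝ ι) (hτ : ‖τ‖ = 1) :
    ‖μ • g + τ‖ ^ 2 = μ ^ 2 * ‖g‖ ^ 2 + 2 * μ * inner ℝ g τ + 1 := by
  rw [norm_add_sq_real, norm_smul, inner_smul_left, hτ, Real.norm_eq_abs, mul_pow, sq_abs,
    conj_trivial]
  ring

lemma sum_sq_add_sub_one_eq_of_eikonal (μ v : ℝ) (ρ : ℂ) (g τ d : EuclideanSpace ℝ ι)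
    (hτ : ‖τ‖ = 1) (heik : ‖g‖ ^ 2 + v = 0) :
    ∑ j, ((μ • g + τ) j + I * d j) ^ 2 + (μ : ℂ) ^ 2 * (v - ρ) - 1
      = ((2 * μ * inner ℝ g τ - ‖d‖ ^ 2 : ℝ) : ℂ) + 2 * I * (inner ℝ (μ • g + τ) d : ℝ)
        - ((μ ^ 2 : ℝ) : ℂ) * ρ := by
  rw [sum_ofReal_add_I_mul_sq, norm_smul_add_sq_of_norm_eq_one μ g τ hτ]
  have hv : (v : ℂ) = -((‖g‖ ^ 2 : ℝ) : ℂ) := by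
    rw [eq_neg_iff_add_eq_zero, add_comm]
    exact_mod_cast heik
  rw [hv]
  push_cast
  ring

lemma norm_coeff_sub_one_le (M R μ : ℝ) (ρ : ℂ) (g τ d : EuclideanSpace ℝ ι)
    (hg : ‖g‖ ≤ M) (hτ : ‖τ‖ = 1) (hd : ‖d‖ ≤ 1) (hμ : μ ∈ Set.Ioc (0 : ℝ) 1) (hρ : ‖ρ‖ ≤ R) :
    ‖((2 * μ * inner ℝ g τ - ‖d‖ ^ 2 : ℝ) : ℂ) + 2 * I * (inner ℝ (μ • g + τ) d : ℝ)
        - ((μ ^ 2 : ℝ) : ℂ) * ρ‖ ≤ (3 + 4 * M + R) * (‖d‖ + μ) := by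
  obtain ⟨hμ0, hμ1⟩ := hμ
  have hM : 0 ≤ M := (norm_nonneg g).trans hg
  have hR : 0 ≤ R := (norm_nonneg ρ).trans hρ
  have hd0 := norm_nonneg d
  have hgτ : |inner ℝ g τ| ≤ M := by
    simpa [hτ] using (abs_real_inner_le_norm g τ).trans (by rw [hτ, mul_one]; exact hg)
  have ha : ‖μ • g + τ‖ ≤ μ * M + 1 := by
    calc ‖μ • g + τ‖ ≤ μ * ‖g‖ + ‖τ‖ := by
          simpa [norm_smul, abs_of_pos hμ0] using norm_add_le (μ • g) τ
      _ ≤ μ * M + 1 := by rw [hτ]; gcongr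
  have had : |inner ℝ (μ • g + τ) d| ≤ (μ * M + 1) * ‖d‖ :=
    (abs_real_inner_le_norm _ _).trans (by gcongr)
  have hρ' : ‖((μ ^ 2 : ℝ) : ℂ) * ρ‖ ≤ μ * R := by
    rw [norm_mul, norm_real, Real.norm_eq_abs, abs_of_pos (by positivity)]
    calc μ ^ 2 * ‖ρ‖ ≤ μ ^ 2 * R := by gcongr
      _ ≤ μ * R := mul_le_mul_of_nonneg_right (by nlinarith) hR
  refine (norm_ofReal_add_two_I_mul_sub_le _ _ _).trans ?_
  have h1 : |2 * μ * inner ℝ g τ - ‖d‖ ^ 2| ≤ 2 * μ * M + ‖d‖ := by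
    rw [abs_le]; constructor <;> nlinarith [abs_le.mp hgτ]
  nlinarith [mul_nonneg hM hd0, mul_nonneg hR hd0,
    mul_le_mul_of_nonneg_left hd (by positivity : 0 ≤ μ * M)]

theorem stmt4_general {n : ℕ} (M R : ℝ)
    (ψ : EuclideanSpace ℝ (Fin n) → ℝ) (V : EuclideanSpace ℝ (Fin n) → ℝ)
    (heik : ∀ y, ‖gradient ψ y‖ ^ 2 + V y = 0)
    (hgrad : ∀ y, ‖gradient ψ y‖ ≤ M)
    (τ : EuclideanSpace ℝ (Fin n)) (hτ : ‖τ‖ = 1)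
    (μ : ℝ) (hμ : μ ∈ Set.Ioc (0 : ℝ) 1) (ρ : ℂ) (hρ : ‖ρ‖ ≤ R)
    (x y : EuclideanSpace ℝ (Fin n)) (hxy : ‖x - y‖ ≤ 1) :
    ‖      ((∑ j : Fin n,
          ((μ * fderiv ℝ ψ y (EuclideanSpace.single j 1) : ℂ)
            - (-(τ j : ℂ) - Complex.I * ((x j : ℂ) - (y j : ℂ)))) ^ 2)
        + (μ : ℂ) ^ 2 * ((V y : ℂ) - ρ) - 1)‖
      ≤ (3 + 4 * M + R) * (‖x - y‖ + μ) := by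
  have hterm : ∀ j, (μ * fderiv ℝ ψ y (EuclideanSpace.single j 1) : ℂ)
      - (-(τ j : ℂ) - I * ((x j : ℂ) - (y j : ℂ)))
      = ((μ • gradient ψ y + τ) j : ℂ) + I * (x - y) j := by
    intro j
    rw [fderiv_apply_single_eq_gradient]
    simp only [PiLp.add_apply, PiLp.smul_apply, PiLp.sub_apply, smul_eq_mul]
    push_cast
    ring
  simp only [hterm]
  rw [sum_sq_add_sub_one_eq_of_eikonal μ (V y) ρ _ τ _ hτ (heik y)]
  exact norm_coeff_sub_one_le M R μ ρ _ τ _ (hgrad y) hτ hxy hμ hρ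

/-- Leading-order symbol computation (Section 5 of the paper): with the eikonal
equation `|∇ψ|² + V = 0`, `|∇ψ| ≤ M`, `|τ| = 1`, `∇_y φ = -τ - i(x-y)` for the
phase `φ(x,y,τ) = (x-y)·τ + (i/2)|x-y|²`, the coefficient
`c₂ = Σⱼ (μ ∂ⱼψ(y) - ∂_{yⱼ}φ)² + μ²(V(y) - ρ)` satisfies
`|c₂ - 1| ≤ (3 + 4M + R)(|x - y| + μ)`. -/
theorem stmt4 {n : ℕ} (hn : 1 ≤ n) (M R : ℝ) (hM : 0 < M) (hR : 0 < R)
    (ψ : EuclideanSpace ℝ (Fin n) → ℝ) (V : EuclideanSpace ℝ (Fin n) → ℝ)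
    (hψ : ContDiff ℝ 1 ψ)
    (heik : ∀ y, ‖gradient ψ y‖ ^ 2 + V y = 0)
    (hgrad : ∀ y, ‖gradient ψ y‖ ≤ M)
    (τ : EuclideanSpace ℝ (Fin n)) (hτ : ‖τ‖ = 1)
    (μ : ℝ) (hμ : μ ∈ Set.Ioc (0 : ℝ) 1) (ρ : ℂ) (hρ : ‖ρ‖ ≤ R)
    (x y : EuclideanSpace ℝ (Fin n)) (hxy : ‖x - y‖ ≤ 1) :
    ‖      ((∑ j : Fin n,
          ((μ * fderiv ℝ ψ y (EuclideanSpace.single j 1) : ℂ)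
            - (-(τ j : ℂ) - Complex.I * ((x j : ℂ) - (y j : ℂ)))) ^ 2)
        + (μ : ℂ) ^ 2 * ((V y : ℂ) - ρ) - 1)‖
      ≤ (3 + 4 * M + R) * (‖x - y‖ + μ) :=
  stmt4_general M R ψ V heik hgrad τ hτ μ hμ ρ hρ x y hxy
end

section
/- Let n ≥ 1, let L > 0, and let V : ℝⁿ → ℝ be Lipschitz continuous with Lipschitz constant L. Assume the sublevel set K := {x ∈ ℝⁿ : V(x) ≤ 0} is nonempty. Then for every x ∈ ℝⁿ, the Agmon distance from x to K satisfies d_V(x, K) ≤ (2/3) √L · dist(x, K)^{3/2}, where dist(x,K) = inf_{y ∈ K} |x − y| is the Euclidean distance and d_V(x,K) := inf_{y ∈ K} d_V(x,y). -/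
/-!
Join `x` to a nearest point `y` of `K` by the straight segment `t ↦ x + t (y - x)`. Since `V y ≤ 0`,
the Lipschitz bound gives `V ≤ L (1 - t) ‖x - y‖` along it, so its Agmon length is at most
`√L ‖x - y‖^{3/2} ∫₀¹ √(1 - t) dt = (2/3) √L ‖x - y‖^{3/2}`.
-/

open MeasureTheory

/-- A path `γ` is piecewise `C¹` on `[0,1]`: it is continuous on `[0,1]` and
there is a finite partition `0 = t₀ < t₁ < ⋯ < t_m = 1` such that `γ` is `C¹`
on each subinterval `[tᵢ, tᵢ₊₁]`. -/
def PiecewiseC1On01 {n : ℕ} (γ : ℝ → EuclideanSpace ℝ (Fin n)) : Prop :=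
  ContinuousOn γ (Set.Icc 0 1) ∧
  ∃ (m : ℕ) (t : Fin (m + 1) → ℝ), StrictMono t ∧ t 0 = 0 ∧ t (Fin.last m) = 1 ∧
    ∀ i : Fin m, ContDiffOn ℝ 1 γ (Set.Icc (t i.castSucc) (t i.succ))

/-- The Agmon length `∫₀¹ √(max(V(γ(t)),0)) |γ'(t)| dt` of a path `γ`. -/
noncomputable def agmonLength {n : ℕ} (V : EuclideanSpace ℝ (Fin n) → ℝ)
    (γ : ℝ → EuclideanSpace ℝ (Fin n)) : ℝ :=
  ∫ t in (0 : ℝ)..1, Real.sqrt (max (V (γ t)) 0) * ‖deriv γ t‖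

/-- The Agmon distance `d_V(x,y)`: infimum of the Agmon length over piecewise
`C¹` paths from `x` to `y`. -/
noncomputable def agmonDist {n : ℕ} (V : EuclideanSpace ℝ (Fin n) → ℝ)
    (x y : EuclideanSpace ℝ (Fin n)) : ℝ :=
  sInf {c | ∃ γ : ℝ → EuclideanSpace ℝ (Fin n),
    PiecewiseC1On01 γ ∧ γ 0 = x ∧ γ 1 = y ∧ c = agmonLength V γ}

/-- The Agmon distance between two sets: `d_V(A,B) = inf_{a∈A, b∈B} d_V(a,b)`. -/
noncomputable def agmonDistSet {n : ℕ} (V : EuclideanSpace ℝ (Fin n) → ℝ)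
    (A B : Set (EuclideanSpace ℝ (Fin n))) : ℝ :=
  sInf {c | ∃ a ∈ A, ∃ b ∈ B, c = agmonDist V a b}

/-- The Agmon distance from a set to a point: `d_V(A,x) = inf_{a∈A} d_V(a,x)`. -/
noncomputable def agmonDistSetPt {n : ℕ} (V : EuclideanSpace ℝ (Fin n) → ℝ)
    (A : Set (EuclideanSpace ℝ (Fin n))) (x : EuclideanSpace ℝ (Fin n)) : ℝ :=
  sInf {c | ∃ a ∈ A, c = agmonDist V a x}

/-- The Agmon distance from a point to a set: `d_V(x,B) = inf_{b∈B} d_V(x,b)`. -/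
noncomputable def agmonDistPtSet {n : ℕ} (V : EuclideanSpace ℝ (Fin n) → ℝ)
    (x : EuclideanSpace ℝ (Fin n)) (B : Set (EuclideanSpace ℝ (Fin n))) : ℝ :=
  sInf {c | ∃ b ∈ B, c = agmonDist V x b}

open intervalIntegral AffineMap
open scoped NNReal

section

variable {n : ℕ}

theorem PiecewiseC1On01.of_contDiff {γ : ℝ → EuclideanSpace ℝ (Fin n)} (hγ : ContDiff ℝ 1 γ) :
    PiecewiseC1On01 γ :=
  ⟨hγ.continuous.continuousOn, 1, fun i => (i : ℝ), fun _ _ h => Nat.cast_lt.2 h, by simp,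
    by simp [Fin.last], fun _ => hγ.contDiffOn⟩

theorem agmonLength_nonneg (V : EuclideanSpace ℝ (Fin n) → ℝ)
    (γ : ℝ → EuclideanSpace ℝ (Fin n)) : 0 ≤ agmonLength V γ :=
  integral_nonneg zero_le_one fun _ _ => by positivity

theorem agmonDist_nonneg (V : EuclideanSpace ℝ (Fin n) → ℝ) (x y : EuclideanSpace ℝ (Fin n)) :
    0 ≤ agmonDist V x y :=
  Real.sInf_nonneg <| by rintro _ ⟨γ, -, -, -, rfl⟩; exact agmonLength_nonneg V γ

theorem agmonDist_le_agmonLength (V : EuclideanSpace ℝ (Fin n) → ℝ)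
    {γ : ℝ → EuclideanSpace ℝ (Fin n)} (hγ : PiecewiseC1On01 γ) :
    agmonDist V (γ 0) (γ 1) ≤ agmonLength V γ :=
  csInf_le ⟨0, by rintro _ ⟨γ, -, -, -, rfl⟩; exact agmonLength_nonneg V γ⟩ ⟨γ, hγ, rfl, rfl, rfl⟩

theorem agmonDistPtSet_le_agmonDist (V : EuclideanSpace ℝ (Fin n) → ℝ)
    (x : EuclideanSpace ℝ (Fin n)) {B : Set (EuclideanSpace ℝ (Fin n))} {y : EuclideanSpace ℝ (Fin n)}
    (hy : y ∈ B) : agmonDistPtSet V x B ≤ agmonDist V x y :=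
  csInf_le ⟨0, by rintro _ ⟨b, -, rfl⟩; exact agmonDist_nonneg V x b⟩ ⟨y, hy, rfl⟩

theorem agmonLength_lineMap (V : EuclideanSpace ℝ (Fin n) → ℝ) (x y : EuclideanSpace ℝ (Fin n)) :
    agmonLength V (lineMap x y) = ∫ t in (0 : ℝ)..1, √(max (V (lineMap x y t)) 0) * ‖x - y‖ := by
  simp only [agmonLength, hasDerivAt_lineMap.deriv, norm_sub_rev]

theorem integral_sqrt_one_sub : ∫ t in (0 : ℝ)..1, √(1 - t) = 2 / 3 := by
  rw [integral_comp_sub_left (fun t => √t) 1]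
  simp only [sub_self, sub_zero, Real.sqrt_eq_rpow]
  rw [integral_rpow (Or.inl (by norm_num))]
  norm_num

theorem sqrt_max_lineMap_le {K : ℝ≥0} {V : EuclideanSpace ℝ (Fin n) → ℝ} (hV : LipschitzWith K V)
    (x : EuclideanSpace ℝ (Fin n)) {y : EuclideanSpace ℝ (Fin n)} (hy : V y ≤ 0) {t : ℝ}
    (ht : t ∈ Set.Icc (0 : ℝ) 1) :
    √(max (V (lineMap x y t)) 0) ≤ √(K * ‖x - y‖) * √(1 - t) := by
  have hdist : dist (lineMap x y t) y = (1 - t) * ‖x - y‖ := by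
    rw [dist_lineMap_right, Real.norm_of_nonneg (sub_nonneg.2 ht.2), dist_eq_norm]
  have hVt : V (lineMap x y t) ≤ K * ‖x - y‖ * (1 - t) := by
    have hlip := hV.dist_le_mul (lineMap x y t) y
    rw [Real.dist_eq, hdist] at hlip
    linarith [le_abs_self (V (lineMap x y t) - V y)]
  rw [← Real.sqrt_mul (by positivity)]
  exact Real.sqrt_le_sqrt (max_le hVt (mul_nonneg (by positivity) (sub_nonneg.2 ht.2)))

theorem agmonDist_le_of_lipschitzWith {K : ℝ≥0} {V : EuclideanSpace ℝ (Fin n) → ℝ}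
    (hV : LipschitzWith K V) (x : EuclideanSpace ℝ (Fin n)) {y : EuclideanSpace ℝ (Fin n)}
    (hy : V y ≤ 0) : agmonDist V x y ≤ 2 / 3 * √K * ‖x - y‖ ^ (3 / 2 : ℝ) := by
  set d := ‖x - y‖
  have hcont : Continuous fun t : ℝ => √(max (V (lineMap x y t)) 0) * d :=
    ((hV.continuous.comp lineMap_continuous).max continuous_const).sqrt.mul continuous_const
  calc agmonDist V x y = agmonDist V (lineMap x y (0 : ℝ)) (lineMap x y (1 : ℝ)) := by simp
    _ ≤ agmonLength V (lineMap x y) :=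
      agmonDist_le_agmonLength V (.of_contDiff (contDiff_lineMap x y))
    _ = ∫ t in (0 : ℝ)..1, √(max (V (lineMap x y t)) 0) * d := agmonLength_lineMap V x y
    _ ≤ ∫ t in (0 : ℝ)..1, √(K * d) * d * √(1 - t) := by
      refine integral_mono_on zero_le_one (hcont.intervalIntegrable _ _)
        ((by fun_prop : Continuous fun t : ℝ => √(K * d) * d * √(1 - t)).intervalIntegrable _ _)
        fun t ht => ?_
      rw [mul_right_comm]
      exact mul_le_mul_of_nonneg_right (sqrt_max_lineMap_le hV x hy ht) (norm_nonneg _)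
    _ = √K * √d * d * (2 / 3) := by
      rw [intervalIntegral.integral_const_mul, integral_sqrt_one_sub, Real.sqrt_mul K.coe_nonneg]
    _ = 2 / 3 * √K * d ^ (3 / 2 : ℝ) := by
      rw [show (3 / 2 : ℝ) = 1 + 1 / 2 by norm_num, Real.rpow_add' (norm_nonneg _) (by norm_num),
        Real.rpow_one, ← Real.sqrt_eq_rpow]
      ring

end

theorem stmt7_general {n : ℕ} (L : ℝ)
    (V : EuclideanSpace ℝ (Fin n) → ℝ)
    (hlip : ∀ x y : EuclideanSpace ℝ (Fin n), |V x - V y| ≤ L * ‖x - y‖)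
    (hK : {x : EuclideanSpace ℝ (Fin n) | V x ≤ 0}.Nonempty) :
    ∀ x : EuclideanSpace ℝ (Fin n),
      agmonDistPtSet V x {y | V y ≤ 0}
        ≤ (2 / 3) * Real.sqrt L *
            Metric.infDist x {y | V y ≤ 0} ^ (3 / 2 : ℝ) := by
  intro x
  have hV : LipschitzWith L.toNNReal V :=
    .of_dist_le' fun a b => by simpa only [dist_eq_norm, Real.norm_eq_abs] using hlip a b
  obtain ⟨y, hy, hxy⟩ := (isClosed_le hV.continuous continuous_const).exists_infDist_eq_dist hK x
  calc agmonDistPtSet V x {y | V y ≤ 0} ≤ agmonDist V x y := agmonDistPtSet_le_agmonDist V x hy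
    _ ≤ 2 / 3 * √(L.toNNReal : ℝ) * ‖x - y‖ ^ (3 / 2 : ℝ) := agmonDist_le_of_lipschitzWith hV x hy
    _ = 2 / 3 * √L * Metric.infDist x {y | V y ≤ 0} ^ (3 / 2 : ℝ) := by
      -- `√` already truncates negative arguments to `0`, so `√(L.toNNReal) = √L` for every `L`.
      rw [hxy, dist_eq_norm, Real.sqrt, Real.sqrt, Real.toNNReal_coe]

/-- The 3/2-power estimate of Section 6: if `V` is `L`-Lipschitz and
`K = {V ≤ 0}` is nonempty, then `d_V(x,K) ≤ (2/3) √L · dist(x,K)^{3/2}`. -/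
theorem stmt7 {n : ℕ} (hn : 1 ≤ n) (L : ℝ) (hL : 0 < L)
    (V : EuclideanSpace ℝ (Fin n) → ℝ)
    (hlip : ∀ x y : EuclideanSpace ℝ (Fin n), |V x - V y| ≤ L * ‖x - y‖)
    (hK : {x : EuclideanSpace ℝ (Fin n) | V x ≤ 0}.Nonempty) :
    ∀ x : EuclideanSpace ℝ (Fin n),
      agmonDistPtSet V x {y | V y ≤ 0}
        ≤ (2 / 3) * Real.sqrt L *
            Metric.infDist x {y | V y ≤ 0} ^ (3 / 2 : ℝ) :=
  stmt7_general L V hlip hK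
end

section
/- Let n ≥ 1 and let V : ℝⁿ → ℝ be continuous. Let U ⊆ ℝⁿ be nonempty and compact, let M ⊆ ℝⁿ be nonempty and closed, with U ∩ M = ∅ and {x ∈ ℝⁿ : V(x) ≤ 0} ⊆ U ∪ M. Then the Agmon distance between U and M is strictly positive: d_V(U, M) > 0. -/
open MeasureTheory

/-! Points of `M` lie at distance at least some `δ > 0` from the compact set `U`, so a path from
`U` to `M` crosses the shell `{δ/3 ≤ dist(·, U) ≤ 2δ/3}`: on some parameter interval it stays in the
shell while its endpoints are at least `δ/3` apart. The shell is compact and misses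
`U ∪ M ⊇ {V ≤ 0}`, so `V ≥ ε > 0` on it, and the crossing alone has Agmon length at least
`√ε · δ/3`. -/

open Set Metric

theorem Fin.exists_mem_Ioo_of_notMem_range {m : ℕ} {t : Fin (m + 1) → ℝ} {x : ℝ}
    (hx : x ∈ Ioo (t 0) (t (Fin.last m))) (hxt : x ∉ range t) :
    ∃ i : Fin m, x ∈ Ioo (t i.castSucc) (t i.succ) := by
  classical
  set below := Finset.univ.filter fun j => t j < x
  have hne : below.Nonempty := ⟨0, by simpa [below] using hx.1⟩
  have hi : t (below.max' hne) < x := by simpa [below] using below.max'_mem hne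
  obtain ⟨j, hj⟩ : ∃ j : Fin m, j.castSucc = below.max' hne :=
    Fin.exists_castSucc_eq.2 fun h => by rw [h] at hi; linarith [hx.2]
  rw [← hj] at hi
  refine ⟨j, hi, lt_of_not_ge fun hle => ?_⟩
  have hlt : t j.succ < x := hle.lt_of_ne fun h => hxt ⟨_, h⟩
  exact (Fin.castSucc_lt_succ (i := j)).not_ge (hj ▸ below.le_max' _ (by simpa [below] using hlt))

open Fin.NatCast in
theorem IntervalIntegrable.of_fin_partition {E : Type*} [NormedAddCommGroup E]
    {μ : Measure ℝ} {f : ℝ → E} {m : ℕ} {t : Fin (m + 1) → ℝ}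
    (h : ∀ i : Fin m, IntervalIntegrable f μ (t i.castSucc) (t i.succ)) :
    IntervalIntegrable f μ (t 0) (t (Fin.last m)) := by
  have := IntervalIntegrable.trans_iterate (a := fun k : ℕ => t (k : Fin (m + 1))) (n := m)
    fun k hk => by
      simpa [Fin.natCast_eq_mk (Nat.lt_succ_of_lt hk), Fin.natCast_eq_mk (Nat.succ_lt_succ hk)]
        using h ⟨k, hk⟩
  simpa [Fin.natCast_eq_last] using this

theorem ContDiffOn.intervalIntegrable_deriv {E : Type*} [NormedAddCommGroup E] [NormedSpace ℝ E]
    {γ : ℝ → E} {c d : ℝ} (hcd : c < d) (h : ContDiffOn ℝ 1 γ (Icc c d)) :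
    IntervalIntegrable (deriv γ) volume c d := by
  have hcont : ContinuousOn (derivWithin γ (Icc c d)) (Icc c d) :=
    h.continuousOn_derivWithin (uniqueDiffOn_Icc hcd) le_rfl
  refine (hcont.intervalIntegrable_of_Icc hcd.le).congr_uIoo fun x hx => ?_
  rw [uIoo_of_le hcd.le] at hx
  exact derivWithin_of_mem_nhds (Icc_mem_nhds hx.1 hx.2)

theorem ContinuousOn.exists_crossing_Icc {f : ℝ → ℝ} {a b α β : ℝ} (hab : a ≤ b)
    (hf : ContinuousOn f (Icc a b)) (ha : f a ≤ α) (hb : β ≤ f b) :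
    ∃ s₀ s₁, a ≤ s₀ ∧ s₀ ≤ s₁ ∧ s₁ ≤ b ∧ f s₀ ≤ α ∧ β ≤ f s₁ ∧
      ∀ s ∈ Ioo s₀ s₁, f s ∈ Ioo α β := by
  obtain ⟨s₁, ⟨⟨ha₁, h₁b⟩, hβ₁⟩, hleast⟩ :=
    (isCompact_Icc.of_isClosed_subset (hf.preimage_isClosed_of_isClosed isClosed_Icc isClosed_Ici)
      inter_subset_left).exists_isLeast ⟨b, ⟨hab, le_rfl⟩, hb⟩
  obtain ⟨s₀, ⟨⟨ha₀, h₀₁⟩, hα₀⟩, hgreatest⟩ :=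
    (isCompact_Icc.of_isClosed_subset
      ((hf.mono (Icc_subset_Icc_right h₁b)).preimage_isClosed_of_isClosed isClosed_Icc isClosed_Iic)
      inter_subset_left).exists_isGreatest ⟨a, ⟨le_rfl, ha₁⟩, ha⟩
  refine ⟨s₀, s₁, ha₀, h₀₁, h₁b, hα₀, hβ₁, fun s hs => ⟨lt_of_not_ge fun h => ?_,
    lt_of_not_ge fun h => ?_⟩⟩
  · exact hs.1.not_ge (hgreatest ⟨⟨ha₀.trans hs.1.le, hs.2.le⟩, h⟩)
  · exact hs.2.not_ge (hleast ⟨⟨ha₀.trans hs.1.le, hs.2.le.trans h₁b⟩, h⟩)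

section InfDist

variable {X : Type*} [PseudoMetricSpace X] {U M : Set X}

theorem IsCompact.exists_pos_le_infDist (hU : IsCompact U) (hUne : U.Nonempty) (hM : IsClosed M)
    (hMne : M.Nonempty) (hUM : Disjoint U M) : ∃ δ > 0, ∀ x ∈ M, δ ≤ infDist x U := by
  obtain ⟨δ, hδ, hle⟩ := hU.exists_forall_le' (continuous_infDist_pt M).continuousOn
    fun x hx => (hM.notMem_iff_infDist_pos hMne).1 (hUM.notMem_of_mem_left hx)
  exact ⟨δ, hδ, fun x hx => (le_infDist hUne).2 fun u hu =>
    (hle u hu).trans (dist_comm x u ▸ infDist_le_dist_of_mem hx)⟩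

theorem IsCompact.isCompact_preimage_infDist_Icc [ProperSpace X] (hU : IsCompact U)
    (hUne : U.Nonempty) (α β : ℝ) : IsCompact ((infDist · U) ⁻¹' Icc α β) :=
  isCompact_of_isClosed_isBounded (isClosed_Icc.preimage (continuous_infDist_pt U))
    (hU.isBounded.thickening.subset fun x hx =>
      (mem_thickening_iff_infDist_lt (δ := β + 1) hUne).2 (by linarith [hx.2]))

end InfDist

namespace PiecewiseC1On01

variable {n : ℕ} {γ : ℝ → EuclideanSpace ℝ (Fin n)}

theorem intervalIntegrable_deriv (hγ : PiecewiseC1On01 γ) :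
    IntervalIntegrable (deriv γ) volume 0 1 := by
  obtain ⟨-, m, t, ht, ht0, ht1, hC1⟩ := hγ
  rw [← ht0, ← ht1]
  exact IntervalIntegrable.of_fin_partition fun i =>
    (hC1 i).intervalIntegrable_deriv (ht Fin.castSucc_lt_succ)

theorem exists_countable_hasDerivAt (hγ : PiecewiseC1On01 γ) :
    ∃ S : Set ℝ, S.Countable ∧ ∀ x ∈ Ioo 0 1 \ S, HasDerivAt γ (deriv γ x) x := by
  obtain ⟨-, m, t, -, ht0, ht1, hC1⟩ := hγ
  refine ⟨range t, countable_range t, fun x ⟨hx, hxt⟩ => ?_⟩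
  obtain ⟨i, hi⟩ := Fin.exists_mem_Ioo_of_notMem_range (by rwa [ht0, ht1]) hxt
  exact ((hC1 i).differentiableOn one_ne_zero x (Ioo_subset_Icc_self hi)).differentiableAt
    (Icc_mem_nhds hi.1 hi.2) |>.hasDerivAt

theorem norm_sub_le_integral_norm_deriv (hγ : PiecewiseC1On01 γ) {a b : ℝ}
    (ha : 0 ≤ a) (hab : a ≤ b) (hb : b ≤ 1) :
    ‖γ b - γ a‖ ≤ ∫ s in a..b, ‖deriv γ s‖ := by
  obtain ⟨S, hS, hderiv⟩ := hγ.exists_countable_hasDerivAt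
  have hsub : Icc a b ⊆ Icc 0 1 := Icc_subset_Icc ha hb
  have hFTC : ∫ s in a..b, deriv γ s = γ b - γ a :=
    integral_eq_of_hasDerivAt_off_countable_of_le γ (deriv γ) hab hS (hγ.1.mono hsub)
      (fun x hx => hderiv x ⟨Ioo_subset_Ioo ha hb hx.1, hx.2⟩)
      (hγ.intervalIntegrable_deriv.mono_set (by simpa [uIcc_of_le hab] using hsub))
  rw [← hFTC]
  exact intervalIntegral.norm_integral_le_integral_norm hab

theorem sqrt_mul_norm_sub_le_agmonLength (hγ : PiecewiseC1On01 γ)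
    {V : EuclideanSpace ℝ (Fin n) → ℝ} (hV : Continuous V) {ε s₀ s₁ : ℝ}
    (h₀ : 0 ≤ s₀) (h₀₁ : s₀ ≤ s₁) (h₁ : s₁ ≤ 1) (hε : ∀ s ∈ Ioo s₀ s₁, ε ≤ V (γ s)) :
    √ε * ‖γ s₁ - γ s₀‖ ≤ agmonLength V γ := by
  have hint : IntervalIntegrable (fun s => √(max (V (γ s)) 0) * ‖deriv γ s‖) volume 0 1 :=
    hγ.intervalIntegrable_deriv.norm.continuousOn_mul <| by
      rw [uIcc_of_le zero_le_one]
      exact (hV.comp_continuousOn hγ.1).sup continuousOn_const |>.sqrt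
  have hsub : uIcc s₀ s₁ ⊆ uIcc 0 1 := by
    rw [uIcc_of_le h₀₁, uIcc_of_le zero_le_one]
    exact Icc_subset_Icc h₀ h₁
  calc √ε * ‖γ s₁ - γ s₀‖ ≤ √ε * ∫ s in s₀..s₁, ‖deriv γ s‖ :=
        mul_le_mul_of_nonneg_left (hγ.norm_sub_le_integral_norm_deriv h₀ h₀₁ h₁) (by positivity)
    _ = ∫ s in s₀..s₁, √ε * ‖deriv γ s‖ := (intervalIntegral.integral_const_mul _ _).symm
    _ ≤ ∫ s in s₀..s₁, √(max (V (γ s)) 0) * ‖deriv γ s‖ := by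
        refine intervalIntegral.integral_mono_on_of_le_Ioo h₀₁
          ((hγ.intervalIntegrable_deriv.mono_set hsub).norm.const_mul _) (hint.mono_set hsub)
          fun s hs => ?_
        exact mul_le_mul_of_nonneg_right
          (Real.sqrt_le_sqrt ((hε s hs).trans (le_max_left _ _))) (norm_nonneg _)
    _ ≤ agmonLength V γ :=
        intervalIntegral.integral_mono_interval h₀ h₀₁ h₁ (ae_of_all _ fun s => by positivity) hint

theorem sqrt_mul_sub_le_agmonLength (hγ : PiecewiseC1On01 γ)
    {V : EuclideanSpace ℝ (Fin n) → ℝ} (hV : Continuous V)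
    {φ : EuclideanSpace ℝ (Fin n) → ℝ} (hφ : LipschitzWith 1 φ) {α β ε : ℝ}
    (h0 : φ (γ 0) ≤ α) (h1 : β ≤ φ (γ 1)) (hε : ∀ x, φ x ∈ Icc α β → ε ≤ V x) :
    √ε * (β - α) ≤ agmonLength V γ := by
  obtain ⟨s₀, s₁, h₀, h₀₁, h₁, hα, hβ, hcross⟩ :=
    (hφ.continuous.comp_continuousOn hγ.1).exists_crossing_Icc zero_le_one h0 h1
  have hdist : β - α ≤ ‖γ s₁ - γ s₀‖ := by
    have hlip := hφ.dist_le_mul (γ s₁) (γ s₀)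
    rw [Real.dist_eq, dist_eq_norm, NNReal.coe_one, one_mul] at hlip
    linarith [le_abs_self (φ (γ s₁) - φ (γ s₀)), show φ (γ s₀) ≤ α from hα,
      show β ≤ φ (γ s₁) from hβ]
  calc √ε * (β - α) ≤ √ε * ‖γ s₁ - γ s₀‖ := mul_le_mul_of_nonneg_left hdist (by positivity)
    _ ≤ agmonLength V γ := hγ.sqrt_mul_norm_sub_le_agmonLength hV h₀ h₀₁ h₁
        fun s hs => hε _ (Ioo_subset_Icc_self (hcross s hs))

end PiecewiseC1On01

theorem ContDiff.piecewiseC1On01 {n : ℕ} {γ : ℝ → EuclideanSpace ℝ (Fin n)}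
    (h : ContDiff ℝ 1 γ) : PiecewiseC1On01 γ :=
  ⟨h.continuous.continuousOn, 1, fun i => (i : ℝ), fun _ _ hij => Nat.cast_lt.2 hij,
    by simp, by simp, fun _ => h.contDiffOn⟩

theorem le_agmonDist {n : ℕ} {V : EuclideanSpace ℝ (Fin n) → ℝ} {x y : EuclideanSpace ℝ (Fin n)}
    {c : ℝ} (h : ∀ γ, PiecewiseC1On01 γ → γ 0 = x → γ 1 = y → c ≤ agmonLength V γ) :
    c ≤ agmonDist V x y :=
  le_csInf ⟨_, AffineMap.lineMap x y, (AffineMap.contDiff_lineMap x y).piecewiseC1On01,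
    by simp, by simp, rfl⟩ (by rintro _ ⟨γ, hγ, h0, h1, rfl⟩; exact h γ hγ h0 h1)

theorem le_agmonDistSet {n : ℕ} {V : EuclideanSpace ℝ (Fin n) → ℝ}
    {A B : Set (EuclideanSpace ℝ (Fin n))} {c : ℝ} (hA : A.Nonempty) (hB : B.Nonempty)
    (h : ∀ a ∈ A, ∀ b ∈ B, c ≤ agmonDist V a b) : c ≤ agmonDistSet V A B :=
  le_csInf (hA.elim fun a ha => hB.elim fun b hb => ⟨_, a, ha, b, hb, rfl⟩)
    (by rintro _ ⟨a, ha, b, hb, rfl⟩; exact h a ha b hb)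

theorem stmt9_general {n : ℕ} (V : EuclideanSpace ℝ (Fin n) → ℝ)
    (hV : Continuous V) (U M : Set (EuclideanSpace ℝ (Fin n)))
    (hUne : U.Nonempty) (hUcomp : IsCompact U)
    (hMne : M.Nonempty) (hMclosed : IsClosed M)
    (hdisj : U ∩ M = ∅)
    (hsub : {x : EuclideanSpace ℝ (Fin n) | V x ≤ 0} ⊆ U ∪ M) :
    0 < agmonDistSet V U M := by
  obtain ⟨δ, hδ, hMδ⟩ := hUcomp.exists_pos_le_infDist hUne hMclosed hMne
    (disjoint_iff_inter_eq_empty.2 hdisj)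
  have hVpos : ∀ x ∈ (infDist · U) ⁻¹' Icc (δ / 3) (2 * δ / 3), 0 < V x := by
    intro x hx
    by_contra! hVx
    rcases hsub hVx with hxU | hxM
    · linarith [hx.1, infDist_zero_of_mem hxU]
    · linarith [hx.2, hMδ x hxM]
  obtain ⟨ε, hε, hεV⟩ :=
    (hUcomp.isCompact_preimage_infDist_Icc hUne _ _).exists_forall_le' hV.continuousOn hVpos
  calc 0 < √ε * (2 * δ / 3 - δ / 3) := mul_pos (Real.sqrt_pos.2 hε) (by linarith)
    _ ≤ agmonDistSet V U M := le_agmonDistSet hUne hMne fun a ha b hb => le_agmonDist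
      fun γ hγ h0 h1 => hγ.sqrt_mul_sub_le_agmonLength hV (lipschitz_infDist_pt U)
        (by rw [h0, infDist_zero_of_mem ha]; positivity) (by rw [h1]; linarith [hMδ b hb]) hεV

/-- Positivity of the Agmon distance `S₀ = d_V(U,M) > 0` (end of Section 2 of
the paper): if `V` is continuous, `U` is compact and nonempty, `M` is closed
and nonempty, `U ∩ M = ∅`, and `{V ≤ 0} ⊆ U ∪ M`, then `d_V(U,M) > 0`. -/
theorem stmt9 {n : ℕ} (hn : 1 ≤ n) (V : EuclideanSpace ℝ (Fin n) → ℝ)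
    (hV : Continuous V) (U M : Set (EuclideanSpace ℝ (Fin n)))
    (hUne : U.Nonempty) (hUcomp : IsCompact U)
    (hMne : M.Nonempty) (hMclosed : IsClosed M)
    (hdisj : U ∩ M = ∅)
    (hsub : {x : EuclideanSpace ℝ (Fin n) | V x ≤ 0} ⊆ U ∪ M) :
    0 < agmonDistSet V U M :=
  stmt9_general V hV U M hUne hUcomp hMne hMclosed hdisj hsub
end
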